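/- Given a fixed initial state x₀, for each i ∈ {2,…,T} there exists a finite set 𝒦_i of sequences (j₁,…,j_{i−1}) of non-negative integers and finite positive constants α_i^{(j₁,…,j_{i−1})}(x₀), depending on x₀ and the exponent sequence but not on the observations or the control, such that for every admissible control u ∈ U, every observation sequence (y₁,…,y_T), and every t ∈ [i−1, i], the hybrid mode x_i satisfies ‖x_i(t)‖₂ ≤ Σ_{(j₁,…,j_{i−1}) ∈ 𝒦_i} α_i^{(j₁,…,j_{i−1})}(x₀) ∏_{m=1}^{i−1} ‖y_m‖₂^{j_m}. For i = 1, there is a finite positive constant α₁(x₀) with ‖x₁(t)‖₂ ≤ α₁(x₀) for all t ∈ [0,1]. -/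

import Mathlib

open Set MeasureTheory Filter Topology

noncomputable section

open scoped Classical

abbrev EucSp (n : ℕ) := EuclideanSpace ℝ (Fin n)

/-- A function is piecewise continuous on `s` if it is continuous within `s` outside of a
finite set of points. -/
def PiecewiseContinuousOn {E : Type*} [TopologicalSpace E] (u : ℝ → E) (s : Set ℝ) : Prop :=
  ∃ D : Finset ℝ, ∀ t ∈ s, t ∉ D → ContinuousWithinAt u s t

/-- Admissible controls: piecewise continuous functions on `[0, T]` with values in the
closed ball of radius `ρmax`. -/
def AdmissibleCtrl {m : ℕ} (T ρmax : ℝ) (u : ℝ → EucSp m) : Prop :=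
  PiecewiseContinuousOn u (Set.Icc 0 T) ∧ ∀ t ∈ Set.Icc (0 : ℝ) T, ‖u t‖ ≤ ρmax

/-- `x` is a (Carathéodory) solution of `ẋ = f(x, u(t))` on `[a, b]`, in integral form. -/
def IsSolOn {nx m : ℕ} (f : EucSp nx → EucSp m → EucSp nx) (u : ℝ → EucSp m)
    (a b : ℝ) (x : ℝ → EucSp nx) : Prop :=
  ContinuousOn x (Set.Icc a b) ∧
    ∀ t ∈ Set.Icc a b, x t = x a + ∫ s in a..t, f (x s) (u s)

/-- The modes `x i : [i-1, i] → ℝ^{n_x}` of the hybrid system with time-driven switching: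
`x 1 0 = x₀`, each mode solves `ẋ = f(x, u)` on `[i-1, i]`, and modes are linked by the jump
map `g` with observation `y i`. -/
def HybridModes {nx ny m : ℕ} (T : ℕ) (f : EucSp nx → EucSp m → EucSp nx)
    (g : EucSp nx → EucSp ny → EucSp nx) (u : ℝ → EucSp m) (y : ℕ → EucSp ny)
    (x₀ : EucSp nx) (x : ℕ → ℝ → EucSp nx) : Prop :=
  x 1 0 = x₀ ∧
    (∀ i : ℕ, 1 ≤ i → i ≤ T → IsSolOn f u ((i : ℝ) - 1) (i : ℝ) (x i)) ∧
    (∀ i : ℕ, 1 ≤ i → i + 1 ≤ T → x (i + 1) (i : ℝ) = g (x i (i : ℝ)) (y i))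

/-- The hybrid trajectory `X` built from the modes: `X t = x i t` on `[i-1, i)` and
`X T = g (x T T) (y T)`. -/
def IsHybridTraj {nx ny : ℕ} (T : ℕ) (g : EucSp nx → EucSp ny → EucSp nx)
    (y : ℕ → EucSp ny) (x : ℕ → ℝ → EucSp nx) (X : ℝ → EucSp nx) : Prop :=
  (∀ i : ℕ, 1 ≤ i → i ≤ T → ∀ t ∈ Set.Ico ((i : ℝ) - 1) (i : ℝ), X t = x i t) ∧
    X (T : ℝ) = g (x T (T : ℝ)) (y T)

/-- The perturbed control: equal to `v` on `(τ - ε, τ]` and to `u` elsewhere. -/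
def perturb {m : ℕ} (u : ℝ → EucSp m) (τ : ℝ) (v : EucSp m) (ε : ℝ) : ℝ → EucSp m :=
  fun t => if τ - ε < t ∧ t ≤ τ then v else u t

/-!
On the unit interval of mode `i` the state solves `ẋ = f(x, u)` with
`‖f(x, u)‖ ≤ K₁ ‖x‖ + ‖f(0, 0)‖ + K₁ ρmax`, so Grönwall gives
`‖x i t‖ ≤ exp K₁ * ‖x i (i - 1)‖ + β` with `β` independent of `u` and `y`. The jump map grows
polynomially in the state and the observation, so by induction on `i` the bound on mode `i` is a
polynomial with nonnegative coefficients in `‖y 1‖, …, ‖y (i - 1)‖`; its monomials form `𝒦_i`.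
-/

open MvPolynomial

section IntegralEquation

variable {E : Type*} [NormedAddCommGroup E] [NormedSpace ℝ E] {x h : ℝ → E} {a b : ℝ}

theorem sub_eq_intervalIntegral_of_eq_add_integral (hh : IntegrableOn h (Icc a b))
    (hxh : ∀ t ∈ Icc a b, x t = x a + ∫ s in a..t, h s) {c z : ℝ} (hc : c ∈ Icc a b)
    (hz : z ∈ Icc a b) : x z - x c = ∫ s in c..z, h s := by
  have hII : ∀ t ∈ Icc a b, IntervalIntegrable h volume a t := fun t ht =>
    (hh.mono_set (uIcc_subset_Icc (left_mem_Icc.2 (ht.1.trans ht.2)) ht)).intervalIntegrable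
  rw [hxh z hz, hxh c hc, ← intervalIntegral.integral_interval_sub_left (hII z hz) (hII c hc)]
  abel

/-- `h` need not be continuous, so `x` need not be differentiable: Grönwall is applied through
the right Dini derivative of `‖x‖`. -/
theorem norm_le_gronwallBound_of_eq_add_integral {K ε : ℝ} (hx : ContinuousOn x (Icc a b))
    (hh : IntegrableOn h (Icc a b)) (hxh : ∀ t ∈ Icc a b, x t = x a + ∫ s in a..t, h s)
    (hbound : ∀ s ∈ Icc a b, ‖h s‖ ≤ K * ‖x s‖ + ε) :
    ∀ t ∈ Icc a b, ‖x t‖ ≤ gronwallBound ‖x a‖ K ε (t - a) := by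
  refine le_gronwallBound_of_liminf_deriv_right_le (f' := fun s => K * ‖x s‖ + ε) hx.norm
    ?_ le_rfl fun _ _ => le_rfl
  intro s hs r hr
  obtain ⟨r', hsr', hr'r⟩ := exists_between hr
  have hcont : ContinuousWithinAt (fun s => K * ‖x s‖ + ε) (Ici s) s :=
    (((hx s (Ico_subset_Icc_self hs)).norm.const_mul K).add_const ε).mono_of_mem_nhdsWithin
      (Icc_mem_nhdsGE_of_mem hs)
  obtain ⟨c, hsc, hc⟩ := mem_nhdsGE_iff_exists_Ico_subset.1 (hcont.eventually_lt_const hsr')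
  refine Filter.Eventually.frequently ?_
  filter_upwards [Ioo_mem_nhdsGT (lt_min hsc hs.2)] with z hz
  have hzs : 0 < z - s := sub_pos.2 hz.1
  have hsI : s ∈ Icc a b := Ico_subset_Icc_self hs
  have hzI : z ∈ Icc a b := ⟨hs.1.trans hz.1.le, hz.2.le.trans (min_le_right _ _)⟩
  have hint : ‖∫ w in s..z, h w‖ ≤ r' * |z - s| := by
    refine intervalIntegral.norm_integral_le_of_norm_le_const fun w hw => ?_
    rw [uIoc_of_le hz.1.le] at hw
    have hwc : w ∈ Ico s c := ⟨hw.1.le, hw.2.trans_lt (hz.2.trans_le (min_le_left _ _))⟩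
    exact (hbound w ⟨hs.1.trans hw.1.le, hw.2.trans hzI.2⟩).trans (hc hwc).le
  calc (z - s)⁻¹ * (‖x z‖ - ‖x s‖) ≤ (z - s)⁻¹ * ‖x z - x s‖ := by
        gcongr; exact norm_sub_norm_le _ _
    _ ≤ (z - s)⁻¹ * (r' * (z - s)) := by
        rw [sub_eq_intervalIntegral_of_eq_add_integral hh hxh hsI hzI, ← abs_of_pos hzs]
        gcongr
    _ = r' := by field_simp
    _ < r := hr'r

end IntegralEquation

theorem gronwallBound_eq_mul_exp_add (δ K ε x : ℝ) :
    gronwallBound δ K ε x = δ * Real.exp (K * x) + gronwallBound 0 K ε x := by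
  unfold gronwallBound
  split_ifs with hK <;> simp [hK]

theorem gronwallBound_zero_nonneg {K ε x : ℝ} (hK : 0 ≤ K) (hε : 0 ≤ ε) (hx : 0 ≤ x) :
    0 ≤ gronwallBound 0 K ε x :=
  (gronwallBound_x0 0 K ε).symm.le.trans (gronwallBound_mono le_rfl hε hK hx)

theorem PiecewiseContinuousOn.aestronglyMeasurable {E : Type*} [TopologicalSpace E]
    [TopologicalSpace.PseudoMetrizableSpace E] {u : ℝ → E} {s : Set ℝ}
    (hu : PiecewiseContinuousOn u s) (hs : MeasurableSet s) :
    AEStronglyMeasurable u (volume.restrict s) := by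
  obtain ⟨D, hD⟩ := hu
  have hcont : ContinuousOn u (s \ D) := fun t ht => (hD t ht.1 ht.2).mono sdiff_subset
  rw [← Measure.restrict_congr_set (sdiff_null_ae_eq_self (D.finite_toSet.measure_zero _))]
  exact hcont.aestronglyMeasurable (hs.diff D.finite_toSet.measurableSet)

section ControlSystem

variable {nx ny m : ℕ} {ρmax K₁ : ℝ} {f : EucSp nx → EucSp m → EucSp nx} {u : ℝ → EucSp m}

theorem AdmissibleCtrl.radius_nonneg {T : ℝ} (hu : AdmissibleCtrl T ρmax u) (hT : 0 ≤ T) :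
    0 ≤ ρmax :=
  (norm_nonneg _).trans (hu.2 0 ⟨le_rfl, hT⟩)

theorem norm_le_of_lipschitz_of_norm_le
    (hLip : ∀ (x' x'' : EucSp nx) (u' u'' : EucSp m), ‖u'‖ ≤ ρmax → ‖u''‖ ≤ ρmax →
      ‖f x' u' - f x'' u''‖ ≤ K₁ * (‖x' - x''‖ + ‖u' - u''‖))
    (hK₁ : 0 ≤ K₁) {z : EucSp nx} {v : EucSp m} (hv : ‖v‖ ≤ ρmax) :
    ‖f z v‖ ≤ K₁ * ‖z‖ + (‖f 0 0‖ + K₁ * ρmax) := by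
  have h0 : ‖(0 : EucSp m)‖ ≤ ρmax := by simpa using (norm_nonneg v).trans hv
  have := hLip z 0 v 0 hv h0
  rw [sub_zero, sub_zero] at this
  calc ‖f z v‖ ≤ ‖f 0 0‖ + ‖f z v - f 0 0‖ := norm_le_insert' _ _
    _ ≤ ‖f 0 0‖ + K₁ * (‖z‖ + ρmax) := by gcongr; exact this.trans (by gcongr)
    _ = K₁ * ‖z‖ + (‖f 0 0‖ + K₁ * ρmax) := by ring

theorem IsSolOn.norm_le (hfc : Continuous fun p : EucSp nx × EucSp m => f p.1 p.2)
    (hLip : ∀ (x' x'' : EucSp nx) (u' u'' : EucSp m), ‖u'‖ ≤ ρmax → ‖u''‖ ≤ ρmax →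
      ‖f x' u' - f x'' u''‖ ≤ K₁ * (‖x' - x''‖ + ‖u' - u''‖))
    (hK₁ : 0 ≤ K₁) (hρ : 0 ≤ ρmax) {T : ℝ} (hu : AdmissibleCtrl T ρmax u) {a b : ℝ}
    (hsub : Icc a b ⊆ Icc 0 T) (hab : b - a ≤ 1) {x : ℝ → EucSp nx} (hx : IsSolOn f u a b x) :
    ∀ t ∈ Icc a b,
      ‖x t‖ ≤ Real.exp K₁ * ‖x a‖ + gronwallBound 0 K₁ (‖f 0 0‖ + K₁ * ρmax) 1 := by
  have hbound : ∀ s ∈ Icc a b, ‖f (x s) (u s)‖ ≤ K₁ * ‖x s‖ + (‖f 0 0‖ + K₁ * ρmax) :=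
    fun s hs => norm_le_of_lipschitz_of_norm_le hLip hK₁ (hu.2 s (hsub hs))
  have hmeas : AEStronglyMeasurable (fun s => f (x s) (u s)) (volume.restrict (Icc a b)) :=
    hfc.comp_aestronglyMeasurable ((hx.1.aestronglyMeasurable measurableSet_Icc).prodMk
      ((hu.1.aestronglyMeasurable measurableSet_Icc).mono_set hsub))
  obtain ⟨M, hM⟩ := isCompact_Icc.exists_bound_of_continuousOn hx.1
  have hint : IntegrableOn (fun s => f (x s) (u s)) (Icc a b) :=
    (integrableOn_const (C := K₁ * M + (‖f 0 0‖ + K₁ * ρmax)) measure_Icc_lt_top.ne).mono'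
      hmeas <| ae_restrict_of_forall_mem measurableSet_Icc fun s hs =>
        (hbound s hs).trans (by gcongr; exact hM s hs)
  intro t ht
  calc ‖x t‖ ≤ gronwallBound ‖x a‖ K₁ (‖f 0 0‖ + K₁ * ρmax) (t - a) :=
        norm_le_gronwallBound_of_eq_add_integral hx.1 hint hx.2 hbound t ht
    _ ≤ gronwallBound ‖x a‖ K₁ (‖f 0 0‖ + K₁ * ρmax) 1 :=
        gronwallBound_mono (norm_nonneg _) (by positivity) hK₁ (by linarith [ht.2])
    _ = _ := by rw [gronwallBound_eq_mul_exp_add, mul_one, mul_comm]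

end ControlSystem

namespace MvPolynomial

variable {σ R : Type*} [CommSemiring R] [PartialOrder R] [IsOrderedRing R]

variable (R) in
/-- With `σ = ℕ` and `s = {1, …, i - 1}`, these are the paper's bounds
`∑ α^{(j₁,…,j_{i-1})} ∏ ‖y_m‖^{j_m}`. -/
def nonnegSupported (s : Set σ) : Subsemiring (MvPolynomial σ R) where
  carrier := {p | p ∈ supported R s ∧ ∀ d, 0 ≤ p.coeff d}
  mul_mem' {p q} hp hq := ⟨Subalgebra.mul_mem _ hp.1 hq.1, fun d => by
    rw [coeff_mul]; exact Finset.sum_nonneg fun e _ => mul_nonneg (hp.2 _) (hq.2 _)⟩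
  one_mem' := ⟨Subalgebra.one_mem _, fun d => by rw [coeff_one]; split_ifs <;> simp⟩
  add_mem' hp hq := ⟨Subalgebra.add_mem _ hp.1 hq.1, fun d => by
    rw [coeff_add]; exact add_nonneg (hp.2 d) (hq.2 d)⟩
  zero_mem' := ⟨Subalgebra.zero_mem _, fun d => by simp⟩

variable {s t : Set σ}

theorem C_mem_nonnegSupported {c : R} (hc : 0 ≤ c) : C c ∈ nonnegSupported R s :=
  ⟨Subalgebra.algebraMap_mem _ c, fun d => by rw [coeff_C]; split_ifs <;> simp [hc]⟩

theorem X_mem_nonnegSupported [Nontrivial R] {i : σ} (hi : i ∈ s) :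
    X i ∈ nonnegSupported R s :=
  ⟨X_mem_supported.2 hi, fun d => by rw [coeff_X]; split_ifs <;> simp⟩

theorem nonnegSupported_mono (hst : s ⊆ t) : nonnegSupported R s ≤ nonnegSupported R t :=
  fun _ hp => ⟨supported_mono hst hp.1, hp.2⟩

theorem exists_list_sum_monomials_eq_eval {s : Finset σ} {p : MvPolynomial σ R}
    (hp : p ∈ nonnegSupported R ↑s) :
    ∃ K : List ((σ → ℕ) × R), (∀ q ∈ K, 0 < q.2) ∧
      ∀ y : σ → R, (K.map fun q => q.2 * ∏ j ∈ s, y j ^ q.1 j).sum = eval y p := by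
  refine ⟨p.support.toList.map fun d : σ →₀ ℕ => (⇑d, p.coeff d), ?_, fun y => ?_⟩
  · simp only [List.mem_map, Finset.mem_toList]
    rintro _ ⟨d, hd, rfl⟩
    exact (hp.2 d).lt_of_ne' (mem_support_iff.1 hd)
  rw [List.map_map, Finset.sum_map_toList, eval_eq]
  refine Finset.sum_congr rfl fun d hd => congrArg _ (Finset.prod_subset ?_ ?_).symm
  · exact fun j hj => mem_supported.1 hp.1 ((mem_vars_iff_mem_support j).2 ⟨d, hd, hj⟩)
  · intro j _ hj
    simp [Finsupp.notMem_support_iff.1 hj]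

end MvPolynomial

section HybridSystem

open MvPolynomial Real

variable {nx ny m T : ℕ} {ρmax K₁ : ℝ} {f : EucSp nx → EucSp m → EucSp nx}
  {g : EucSp nx → EucSp ny → EucSp nx} {u : ℝ → EucSp m} {y : ℕ → EucSp ny} {x₀ : EucSp nx}
  {x : ℕ → ℝ → EucSp nx}

theorem HybridModes.norm_le (hfc : Continuous fun p : EucSp nx × EucSp m => f p.1 p.2)
    (hLip : ∀ (x' x'' : EucSp nx) (u' u'' : EucSp m), ‖u'‖ ≤ ρmax → ‖u''‖ ≤ ρmax →
      ‖f x' u' - f x'' u''‖ ≤ K₁ * (‖x' - x''‖ + ‖u' - u''‖))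
    (hK₁ : 0 ≤ K₁) (hρ : 0 ≤ ρmax) (hu : AdmissibleCtrl T ρmax u)
    (hx : HybridModes T f g u y x₀ x) {i : ℕ} (hi : 1 ≤ i) (hiT : i ≤ T) :
    ∀ t ∈ Icc ((i : ℝ) - 1) i,
      ‖x i t‖ ≤ exp K₁ * ‖x i (i - 1)‖ + gronwallBound 0 K₁ (‖f 0 0‖ + K₁ * ρmax) 1 := by
  have hi' : (1 : ℝ) ≤ i := by exact_mod_cast hi
  have hiT' : (i : ℝ) ≤ T := by exact_mod_cast hiT
  exact (hx.2.1 i hi hiT).norm_le hfc hLip hK₁ hρ hu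
    (Icc_subset_Icc (by linarith) hiT') (by linarith)

theorem HybridModes.norm_one_le (hfc : Continuous fun p : EucSp nx × EucSp m => f p.1 p.2)
    (hLip : ∀ (x' x'' : EucSp nx) (u' u'' : EucSp m), ‖u'‖ ≤ ρmax → ‖u''‖ ≤ ρmax →
      ‖f x' u' - f x'' u''‖ ≤ K₁ * (‖x' - x''‖ + ‖u' - u''‖))
    (hK₁ : 0 ≤ K₁) (hρ : 0 ≤ ρmax) (hT : 0 < T) (hu : AdmissibleCtrl T ρmax u)
    (hx : HybridModes T f g u y x₀ x) :
    ∀ t ∈ Icc (0 : ℝ) 1,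
      ‖x 1 t‖ ≤ exp K₁ * ‖x₀‖ + gronwallBound 0 K₁ (‖f 0 0‖ + K₁ * ρmax) 1 := by
  simpa [hx.1] using hx.norm_le hfc hLip hK₁ hρ hu le_rfl hT

theorem HybridModes.exists_nonnegSupported_bound {K₂ K₃ K₄ K₅ : ℝ} {L₁ L₂ : ℕ}
    (hfc : Continuous fun p : EucSp nx × EucSp m => f p.1 p.2)
    (hLip : ∀ (x' x'' : EucSp nx) (u' u'' : EucSp m), ‖u'‖ ≤ ρmax → ‖u''‖ ≤ ρmax →
      ‖f x' u' - f x'' u''‖ ≤ K₁ * (‖x' - x''‖ + ‖u' - u''‖))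
    (hK₁ : 0 ≤ K₁) (hρ : 0 ≤ ρmax)
    (hK₂ : 0 ≤ K₂) (hK₃ : 0 ≤ K₃) (hK₄ : 0 ≤ K₄) (hK₅ : 0 ≤ K₅)
    (hgb : ∀ (z : EucSp nx) (yy : EucSp ny),
      ‖g z yy‖ ≤ K₂ + K₃ * ‖z‖ ^ L₁ + K₄ * ‖yy‖ ^ L₂ + K₅ * ‖z‖ ^ L₁ * ‖yy‖ ^ L₂)
    (x₀ : EucSp nx) {i : ℕ} (hi : 1 ≤ i) (hiT : i ≤ T) :
    ∃ P ∈ nonnegSupported ℝ ↑(Finset.Icc 1 (i - 1)),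
      ∀ u : ℝ → EucSp m, AdmissibleCtrl T ρmax u →
      ∀ (y : ℕ → EucSp ny) (x : ℕ → ℝ → EucSp nx), HybridModes T f g u y x₀ x →
      ∀ t ∈ Icc ((i : ℝ) - 1) i, ‖x i t‖ ≤ eval (fun j => ‖y j‖) P := by
  set β := gronwallBound 0 K₁ (‖f 0 0‖ + K₁ * ρmax) 1
  have hβ : 0 ≤ β := gronwallBound_zero_nonneg hK₁ (by positivity) zero_le_one
  induction i, hi using Nat.le_induction with
  | base =>
    refine ⟨C (exp K₁ * ‖x₀‖ + β), C_mem_nonnegSupported (by positivity), ?_⟩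
    intro u hu y x hx t ht
    simpa using hx.norm_one_le hfc hLip hK₁ hρ hiT hu t (by simpa using ht)
  | succ i hi ih =>
    obtain ⟨P, hP, hPbound⟩ := ih (by omega)
    set S := nonnegSupported ℝ (↑(Finset.Icc 1 (i + 1 - 1)) : Set ℕ)
    have hP' : P ∈ S := nonnegSupported_mono (by simp [Set.Icc_subset_Icc_right]) hP
    have hXi : X i ∈ S := X_mem_nonnegSupported (by simp; omega)
    have hC {c : ℝ} (hc : 0 ≤ c) : C c ∈ S := C_mem_nonnegSupported hc
    refine ⟨C (exp K₁ * K₂ + β) + C (exp K₁ * K₃) * P ^ L₁ + C (exp K₁ * K₄) * X i ^ L₂ +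
      C (exp K₁ * K₅) * P ^ L₁ * X i ^ L₂, ?_, ?_⟩
    · exact add_mem (add_mem (add_mem (hC (by positivity))
        (mul_mem (hC (by positivity)) (pow_mem hP' _)))
        (mul_mem (hC (by positivity)) (pow_mem hXi _)))
        (mul_mem (mul_mem (hC (by positivity)) (pow_mem hP' _)) (pow_mem hXi _))
    intro u hu y x hx t ht
    set E := eval (fun j => ‖y j‖) P
    have hjump :
        ‖x (i + 1) i‖ ≤ K₂ + K₃ * E ^ L₁ + K₄ * ‖y i‖ ^ L₂ + K₅ * E ^ L₁ * ‖y i‖ ^ L₂ := by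
      have hxi := hPbound u hu y x hx i ⟨by linarith, le_rfl⟩
      rw [hx.2.2 i hi hiT]
      refine (hgb _ _).trans ?_
      gcongr
    have hmode := hx.norm_le hfc hLip hK₁ hρ hu (by omega) hiT t ht
    rw [show ((i + 1 : ℕ) : ℝ) - 1 = i by push_cast; ring] at hmode
    simp only [map_add, map_mul, map_pow, eval_C, eval_X]
    calc ‖x (i + 1) t‖ ≤ exp K₁ * ‖x (i + 1) i‖ + β := hmode
      _ ≤ exp K₁ * (K₂ + K₃ * E ^ L₁ + K₄ * ‖y i‖ ^ L₂ + K₅ * E ^ L₁ * ‖y i‖ ^ L₂) + β := by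
        gcongr
      _ = _ := by ring

end HybridSystem

theorem bounded_state_trajectory_general {nx ny m : ℕ} (T : ℕ) (hT : 0 < T)
    (ρmax K₁ : ℝ) (hK₁ : 1 ≤ K₁)
    (K₂ K₃ K₄ K₅ : ℝ) (hK₂ : 0 ≤ K₂) (hK₃ : 0 ≤ K₃) (hK₄ : 0 ≤ K₄) (hK₅ : 0 ≤ K₅)
    (L₁ L₂ : ℕ)
    (f : EucSp nx → EucSp m → EucSp nx)
    (hf : ContDiff ℝ 1 fun p : EucSp nx × EucSp m => f p.1 p.2)
    (hLip : ∀ (x' x'' : EucSp nx) (u' u'' : EucSp m), ‖u'‖ ≤ ρmax → ‖u''‖ ≤ ρmax →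
      ‖f x' u' - f x'' u''‖ ≤ K₁ * (‖x' - x''‖ + ‖u' - u''‖))
    (g : EucSp nx → EucSp ny → EucSp nx)
    (hgb : ∀ (z : EucSp nx) (yy : EucSp ny),
      ‖g z yy‖ ≤ K₂ + K₃ * ‖z‖ ^ L₁ + K₄ * ‖yy‖ ^ L₂ + K₅ * ‖z‖ ^ L₁ * ‖yy‖ ^ L₂ ∧
      ‖fderiv ℝ (fun w => g w yy) z‖ ≤
        K₂ + K₃ * ‖z‖ ^ L₁ + K₄ * ‖yy‖ ^ L₂ + K₅ * ‖z‖ ^ L₁ * ‖yy‖ ^ L₂)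
    (x₀ : EucSp nx) :
    (∃ α₁ : ℝ, 0 < α₁ ∧
      ∀ u : ℝ → EucSp m, AdmissibleCtrl (T : ℝ) ρmax u →
      ∀ (y : ℕ → EucSp ny) (x : ℕ → ℝ → EucSp nx), HybridModes T f g u y x₀ x →
      ∀ t ∈ Set.Icc (0 : ℝ) 1, ‖x 1 t‖ ≤ α₁) ∧
    ∀ i : ℕ, 2 ≤ i → i ≤ T →
      ∃ K : List ((ℕ → ℕ) × ℝ), (∀ p ∈ K, 0 < p.2) ∧
        ∀ u : ℝ → EucSp m, AdmissibleCtrl (T : ℝ) ρmax u →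
        ∀ (y : ℕ → EucSp ny) (x : ℕ → ℝ → EucSp nx), HybridModes T f g u y x₀ x →
        ∀ t ∈ Set.Icc ((i : ℝ) - 1) (i : ℝ),
          ‖x i t‖ ≤
            (K.map fun p => p.2 * ∏ mm ∈ Finset.Icc 1 (i - 1), ‖y mm‖ ^ p.1 mm).sum := by
  obtain hρ | hρ := lt_or_ge ρmax 0
  · have hU (u : ℝ → EucSp m) : ¬AdmissibleCtrl (T : ℝ) ρmax u := fun hu =>
      hρ.not_ge (hu.radius_nonneg T.cast_nonneg)
    exact ⟨⟨1, one_pos, fun u hu => (hU u hu).elim⟩,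
      fun i _ _ => ⟨[], by simp, fun u hu => (hU u hu).elim⟩⟩
  have hfc := hf.continuous
  have hK₁' : 0 ≤ K₁ := by linarith
  set β := gronwallBound 0 K₁ (‖f 0 0‖ + K₁ * ρmax) 1
  have hβ : 0 ≤ β := gronwallBound_zero_nonneg hK₁' (by positivity) zero_le_one
  refine ⟨⟨Real.exp K₁ * ‖x₀‖ + β + 1, by positivity, fun u hu y x hx t ht => by
    linarith [hx.norm_one_le hfc hLip hK₁' hρ hT hu t ht]⟩, fun i hi hiT => ?_⟩
  obtain ⟨P, hP, hbound⟩ := HybridModes.exists_nonnegSupported_bound hfc hLip hK₁' hρ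
    hK₂ hK₃ hK₄ hK₅ (fun z yy => (hgb z yy).1) x₀ (by omega) hiT
  obtain ⟨K, hKpos, hKeval⟩ := MvPolynomial.exists_list_sum_monomials_eq_eval hP
  exact ⟨K, hKpos, fun u hu y x hx t ht => (hKeval _).symm ▸ hbound u hu y x hx t ht⟩

/-- Bounded state trajectory, Proposition 8: for each `i ∈ {2,…,T}` there is a
finite collection of exponent sequences with positive constants (independent of the control
and the observations) bounding `‖x i t‖` by a polynomial in `‖y₁‖, …, ‖y_{i−1}‖`; for
`i = 1` the bound is a constant `α₁(x₀)`. -/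
theorem bounded_state_trajectory {nx ny m : ℕ} (T : ℕ) (hT : 0 < T)
    (ρmax K₁ : ℝ) (hK₁ : 1 ≤ K₁)
    (K₂ K₃ K₄ K₅ : ℝ) (hK₂ : 0 ≤ K₂) (hK₃ : 0 ≤ K₃) (hK₄ : 0 ≤ K₄) (hK₅ : 0 ≤ K₅)
    (L₁ L₂ : ℕ) (hL₁ : 0 < L₁) (hL₂ : 0 < L₂)
    (f : EucSp nx → EucSp m → EucSp nx)
    (hf : ContDiff ℝ 1 fun p : EucSp nx × EucSp m => f p.1 p.2)
    (hLip : ∀ (x' x'' : EucSp nx) (u' u'' : EucSp m), ‖u'‖ ≤ ρmax → ‖u''‖ ≤ ρmax →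
      ‖f x' u' - f x'' u''‖ ≤ K₁ * (‖x' - x''‖ + ‖u' - u''‖))
    (g : EucSp nx → EucSp ny → EucSp nx)
    (hgc : Continuous fun p : EucSp nx × EucSp ny => g p.1 p.2)
    (hgd : ∀ yy : EucSp ny, Differentiable ℝ fun z => g z yy)
    (hgb : ∀ (z : EucSp nx) (yy : EucSp ny),
      ‖g z yy‖ ≤ K₂ + K₃ * ‖z‖ ^ L₁ + K₄ * ‖yy‖ ^ L₂ + K₅ * ‖z‖ ^ L₁ * ‖yy‖ ^ L₂ ∧
      ‖fderiv ℝ (fun w => g w yy) z‖ ≤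
        K₂ + K₃ * ‖z‖ ^ L₁ + K₄ * ‖yy‖ ^ L₂ + K₅ * ‖z‖ ^ L₁ * ‖yy‖ ^ L₂)
    (x₀ : EucSp nx) :
    (∃ α₁ : ℝ, 0 < α₁ ∧
      ∀ u : ℝ → EucSp m, AdmissibleCtrl (T : ℝ) ρmax u →
      ∀ (y : ℕ → EucSp ny) (x : ℕ → ℝ → EucSp nx), HybridModes T f g u y x₀ x →
      ∀ t ∈ Set.Icc (0 : ℝ) 1, ‖x 1 t‖ ≤ α₁) ∧
    ∀ i : ℕ, 2 ≤ i → i ≤ T →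
      ∃ K : List ((ℕ → ℕ) × ℝ), (∀ p ∈ K, 0 < p.2) ∧
        ∀ u : ℝ → EucSp m, AdmissibleCtrl (T : ℝ) ρmax u →
        ∀ (y : ℕ → EucSp ny) (x : ℕ → ℝ → EucSp nx), HybridModes T f g u y x₀ x →
        ∀ t ∈ Set.Icc ((i : ℝ) - 1) (i : ℝ),
          ‖x i t‖ ≤
            (K.map fun p => p.2 * ∏ mm ∈ Finset.Icc 1 (i - 1), ‖y mm‖ ^ p.1 mm).sum :=
  bounded_state_trajectory_general T hT ρmax K₁ hK₁ K₂ K₃ K₄ K₅ hK₂ hK₃ hK₄ hK₅ L₁ L₂ f hf hLip g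
    hgb x₀
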